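/- arXiv:2102.02273 — 3 statements merged into one kernel-verified Lean document; each statement's English description precedes it below -/
import Mathlib

section
/- For all real x and u, u = sat(x) := min(max(x,−1),1) if and only if there exists λ ∈ ℝ such that u ≥ −1, u ≤ 1, u ≥ x − λ, λ ≥ 0, (u−1)·λ = 0, and (−u−1)·(u − x + λ) = 0. -/
/-!
The multiplier `l` is the amount `x - 1` by which `x` overshoots the upper bound (it vanishes
unless `u = 1`), and `u - x + l ≥ 0` is a slack that may be positive only at the lower bound
`u = -1`. So both sides say: `u ∈ [-1, 1]`, with `u ≤ x` unless `u = -1` and `x ≤ u` unless `u = 1`.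
-/

section

variable {α : Type*} {a b x u : α}

theorem eq_min_max_iff [LinearOrder α] (hab : a ≤ b) :
    u = min (max x a) b ↔ a ≤ u ∧ u ≤ b ∧ (a < u → u ≤ x) ∧ (u < b → x ≤ u) := by
  constructor
  · rintro rfl
    grind
  · rintro ⟨hau, hub, hx_ge, hx_le⟩
    rcases hub.lt_or_eq with hub | rfl
    · rcases hau.lt_or_eq with hau | rfl
      · have hx : x = u := le_antisymm (hx_le hub) (hx_ge hau)
        rw [hx, max_eq_left hau.le, min_eq_left hub.le]
      · rw [max_eq_right (hx_le hub), min_eq_left hab]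
    · refine (min_eq_right ?_).symm
      rcases hau.lt_or_eq with hau | rfl
      · exact (hx_ge hau).trans (le_max_left _ _)
      · exact le_max_right _ _

theorem exists_complementarity_iff [CommRing α] [LinearOrder α] [IsStrictOrderedRing α] :
    (∃ l : α, a ≤ u ∧ u ≤ b ∧ x - l ≤ u ∧ 0 ≤ l ∧ (u - b) * l = 0 ∧ (a - u) * (u - x + l) = 0) ↔
      a ≤ u ∧ u ≤ b ∧ (a < u → u ≤ x) ∧ (u < b → x ≤ u) := by
  constructor
  · rintro ⟨l, hau, hub, hxl, hl, h_upper, h_lower⟩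
    refine ⟨hau, hub, fun hlt => ?_, fun hlt => ?_⟩
    · have : u - x + l = 0 := (mul_eq_zero.mp h_lower).resolve_left (sub_ne_zero.mpr hlt.ne)
      linarith
    · have : l = 0 := (mul_eq_zero.mp h_upper).resolve_left (sub_ne_zero.mpr hlt.ne)
      linarith
  · rintro ⟨hau, hub, hx_ge, hx_le⟩
    rcases hub.lt_or_eq with hub | rfl
    · refine ⟨0, hau, hub.le, by simpa using hx_le hub, le_rfl, mul_zero _, ?_⟩
      rcases hau.lt_or_eq with hau | rfl
      · rw [le_antisymm (hx_le hub) (hx_ge hau)]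
        ring
      · rw [sub_self, zero_mul]
    · refine ⟨max (x - u) 0, hau, le_rfl, by linarith [le_max_left (x - u) 0], le_max_right _ _,
        by rw [sub_self, zero_mul], ?_⟩
      rcases hau.lt_or_eq with hau | rfl
      · rw [max_eq_left (sub_nonneg.mpr (hx_ge hau))]
        ring
      · rw [sub_self, zero_mul]

end

theorem sat_graph (x u : ℝ) :
    u = min (max x (-1)) 1 ↔
      ∃ l : ℝ, u ≥ -1 ∧ u ≤ 1 ∧ u ≥ x - l ∧ l ≥ 0 ∧
        (u - 1) * l = 0 ∧ (-u - 1) * (u - x + l) = 0 := by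
  rw [eq_min_max_iff (by norm_num), ← exists_complementarity_iff]
  simp only [show -u - 1 = -1 - u by ring, ge_iff_le]
end

section
/- Let f : ℝⁿ → ℝⁿ be Lipschitz on a compact set X ⊆ ℝⁿ with Lipschitz constant L and f(0) = 0, 0 ∈ X. Let W : ℝⁿ → ℝ satisfy W(f(x)) − W(x) ≤ −‖x‖² and W(x) ≥ ‖x‖² for all x ∈ ℝⁿ. Suppose V : ℝⁿ → ℝ satisfies |W(x) − V(x)| ≤ ε‖x‖² for all x ∈ X ∪ f(X), where ε(1 + L²) < 1. Then V(f(x)) − V(x) ≤ −(1 − ε(1+L²))‖x‖² and V(x) ≥ (1−ε)‖x‖² for all x ∈ X. -/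
/-!
On `X` the Lipschitz bound and `f 0 = 0` give `‖f x‖ ≤ L ‖x‖`. Replacing `W` by `V` at the two
points `x` and `f x` costs at most `ε ‖x‖² + ε ‖f x‖² ≤ ε (1 + L²) ‖x‖²` in the decrease, and
`ε ‖x‖²` in the lower bound.
-/

/-- If `ε` is negative, `0 ≤ ε * c` forces `c ≤ 0`, hence `b = c = 0`. -/
theorem mul_le_mul_of_nonneg_mul {ε b c : ℝ} (hb : 0 ≤ b) (hbc : b ≤ c) (hc : 0 ≤ ε * c) :
    ε * b ≤ ε * c := by
  rcases le_or_gt 0 ε with hε | hε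
  · exact mul_le_mul_of_nonneg_left hbc hε
  · have hc' : c ≤ 0 := nonpos_of_mul_nonneg_right hc hε
    have hb0 : b = 0 := le_antisymm (hbc.trans hc') hb
    have hc0 : c = 0 := le_antisymm hc' (hb0 ▸ hbc)
    rw [hb0, hc0]

theorem sub_le_of_abs_sub_le_of_sub_le {E : Type*} [SeminormedAddCommGroup E]
    {W V : E → ℝ} {f : E → E} {ε L : ℝ} {x : E}
    (hx : |W x - V x| ≤ ε * ‖x‖ ^ 2) (hfx : |W (f x) - V (f x)| ≤ ε * ‖f x‖ ^ 2)
    (hdec : W (f x) - W x ≤ -‖x‖ ^ 2) (hnorm : ‖f x‖ ≤ L * ‖x‖) :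
    V (f x) - V x ≤ -(1 - ε * (1 + L ^ 2)) * ‖x‖ ^ 2 := by
  have hsq : ‖f x‖ ^ 2 ≤ L ^ 2 * ‖x‖ ^ 2 := by
    rw [← mul_pow]
    exact pow_le_pow_left₀ (norm_nonneg _) hnorm 2
  have hεx : 0 ≤ ε * ‖x‖ ^ 2 := (abs_nonneg _).trans hx
  have hεfx : ε * ‖f x‖ ^ 2 ≤ ε * (L ^ 2 * ‖x‖ ^ 2) :=
    mul_le_mul_of_nonneg_mul (by positivity) hsq
      (by rw [mul_left_comm]; exact mul_nonneg (sq_nonneg L) hεx)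
  linarith [abs_le.1 hx, abs_le.1 hfx]

theorem lyapunov_perturbation_general {n : ℕ}
    (X : Set (EuclideanSpace ℝ (Fin n))) (h0X : (0 : EuclideanSpace ℝ (Fin n)) ∈ X)
    (f : EuclideanSpace ℝ (Fin n) → EuclideanSpace ℝ (Fin n))
    (L : ℝ)
    (hLip : ∀ x ∈ X, ∀ y ∈ X, ‖f x - f y‖ ≤ L * ‖x - y‖)
    (hf0 : f 0 = 0)
    (W V : EuclideanSpace ℝ (Fin n) → ℝ)
    (hWdec : ∀ x, W (f x) - W x ≤ -‖x‖ ^ 2)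
    (hWlb : ∀ x, W x ≥ ‖x‖ ^ 2)
    (ε : ℝ)
    (happrox : ∀ x ∈ X ∪ f '' X, |W x - V x| ≤ ε * ‖x‖ ^ 2) :
    ∀ x ∈ X, V (f x) - V x ≤ -(1 - ε * (1 + L ^ 2)) * ‖x‖ ^ 2 ∧
      V x ≥ (1 - ε) * ‖x‖ ^ 2 := by
  intro x hx
  have hWVx := happrox x (Or.inl hx)
  have hWVfx := happrox (f x) (Or.inr ⟨x, hx, rfl⟩)
  have hnorm : ‖f x‖ ≤ L * ‖x‖ := by simpa [hf0] using hLip x hx 0 h0X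
  exact ⟨sub_le_of_abs_sub_le_of_sub_le hWVx hWVfx (hWdec x) hnorm,
    by linarith [(abs_le.1 hWVx).2, hWlb x]⟩

theorem lyapunov_perturbation {n : ℕ}
    (X : Set (EuclideanSpace ℝ (Fin n))) (hX : IsCompact X) (h0X : (0 : EuclideanSpace ℝ (Fin n)) ∈ X)
    (f : EuclideanSpace ℝ (Fin n) → EuclideanSpace ℝ (Fin n))
    (L : ℝ)
    (hLip : ∀ x ∈ X, ∀ y ∈ X, ‖f x - f y‖ ≤ L * ‖x - y‖)
    (hf0 : f 0 = 0)
    (W V : EuclideanSpace ℝ (Fin n) → ℝ)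
    (hWdec : ∀ x, W (f x) - W x ≤ -‖x‖ ^ 2)
    (hWlb : ∀ x, W x ≥ ‖x‖ ^ 2)
    (ε : ℝ)
    (happrox : ∀ x ∈ X ∪ f '' X, |W x - V x| ≤ ε * ‖x‖ ^ 2)
    (hε : ε * (1 + L ^ 2) < 1) :
    ∀ x ∈ X, V (f x) - V x ≤ -(1 - ε * (1 + L ^ 2)) * ‖x‖ ^ 2 ∧
      V x ≥ (1 - ε) * ‖x‖ ^ 2 :=
  lyapunov_perturbation_general X h0X f L hLip hf0 W V hWdec hWlb ε happrox
end

section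
/- Let f : ℝⁿ → ℝⁿ be continuous with f(0) = 0 and Lipschitz on a compact set X containing 0. Suppose there exists W ∈ C²(ℝⁿ) with W(f(x)) − W(x) ≤ −‖x‖² and W(x) ≥ ‖x‖² for all x. Then there exist a polynomial V and constants α, β > 0 such that V(f(x)) − V(x) ≤ −α‖x‖² and V(x) ≥ β‖x‖² for all x ∈ X. -/
/-!
Write `W = T₂ + R`, where `T₂` is the second-order Taylor polynomial of `W` at the origin. Since `W`
is `C²`, `R x = o(‖x‖²)`, so `u x = R x / ‖x‖²` extends continuously by `0` at the origin.
Stone–Weierstrass gives a polynomial `q` with `|q - u| ≤ ε` on the compact set `K = X ∪ f(X)`, and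
then `V = T₂ + q ‖x‖²` is a polynomial with `|V - W| ≤ ε ‖x‖²` on `K`. For `ε` small relative to
the Lipschitz constant of `f`, the quadratic decrease and lower bound of `W` pass to `V` with
constants `1/2` and `1 - ε`.
-/

open Filter Asymptotics Metric Topology MvPolynomial

section Taylor

variable {E F : Type*} [NormedAddCommGroup E] [NormedSpace ℝ E]
  [NormedAddCommGroup F] [NormedSpace ℝ F]

theorem isLittleO_sub_of_isLittleO_fderiv {φ : E → F} {φ' : E → E →L[ℝ] F}
    (hφ : ∀ y, HasFDerivAt φ (φ' y) y) (hφ' : φ' =o[𝓝 0] id) :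
    (fun x => φ x - φ 0) =o[𝓝 0] fun x => ‖x‖ ^ 2 := by
  refine isLittleO_iff.2 fun ε hε => ?_
  obtain ⟨δ, hδ, hsmall⟩ := eventually_nhds_iff_ball.1 (isLittleO_iff.1 hφ' hε)
  filter_upwards [ball_mem_nhds 0 hδ] with x hx
  have hbound : ∀ y ∈ closedBall (0 : E) ‖x‖, ‖φ' y‖ ≤ ε * ‖x‖ := fun y hy => by
    have hyx : ‖y‖ ≤ ‖x‖ := by simpa using hy
    calc ‖φ' y‖ ≤ ε * ‖y‖ := hsmall y (by simpa using hyx.trans_lt (by simpa using hx))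
      _ ≤ ε * ‖x‖ := by gcongr
  calc ‖φ x - φ 0‖ ≤ ε * ‖x‖ * ‖x - 0‖ :=
        (convex_closedBall 0 ‖x‖).norm_image_sub_le_of_norm_hasFDerivWithin_le
          (fun y _ => (hφ y).hasFDerivWithinAt) hbound (by simp) (by simp)
    _ = ε * ‖‖x‖ ^ 2‖ := by simp [sq, mul_assoc]

theorem ContDiff.isLittleO_taylor_two {W : E → F} (hW : ContDiff ℝ 2 W) :
    (fun x => W x - W 0 - fderiv ℝ W 0 x - (2 : ℝ)⁻¹ • fderiv ℝ (fderiv ℝ W) 0 x x)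
      =o[𝓝 0] fun x => ‖x‖ ^ 2 := by
  set B := fderiv ℝ (fderiv ℝ W) 0
  have hW' : ∀ y, HasFDerivAt W (fderiv ℝ W y) y := fun y =>
    ((hW.differentiable two_ne_zero) y).hasFDerivAt
  have hB : HasFDerivAt (fderiv ℝ W) B 0 :=
    ((hW.fderiv_right le_rfl).differentiable one_ne_zero 0).hasFDerivAt
  have hsymm : ∀ v w, B v w = B w v := second_derivative_symmetric hW' hB
  -- thanks to the symmetry of `B`, the derivative of `y ↦ B y y / 2` is `B y`
  have hquad : ∀ y, HasFDerivAt (fun x => (2 : ℝ)⁻¹ • B x x) (B y) y := fun y => by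
    refine ((B.hasFDerivAt_of_bilinear (hasFDerivAt_id y) (hasFDerivAt_id y)).const_smul
      (2 : ℝ)⁻¹).congr_fderiv ?_
    ext v
    simp [hsymm v y, ← two_smul ℝ, smul_smul]
  have hφ : ∀ y, HasFDerivAt
      (fun x => W x - W 0 - fderiv ℝ W 0 x - (2 : ℝ)⁻¹ • B x x)
      (fderiv ℝ W y - fderiv ℝ W 0 - B y) y := fun y =>
    (((hW' y).sub_const _).sub (fderiv ℝ W 0).hasFDerivAt).sub (hquad y)
  have hφ' : (fun y => fderiv ℝ W y - fderiv ℝ W 0 - B y) =o[𝓝 0] id :=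
    (hasFDerivAt_iff_isLittleO_nhds_zero.1 hB).congr_left fun h => by simp
  simpa using isLittleO_sub_of_isLittleO_fderiv hφ hφ'

end Taylor

theorem continuous_div_norm_sq_of_isLittleO {E : Type*} [NormedAddCommGroup E] {g : E → ℝ}
    (hg : Continuous g) (ho : g =o[𝓝 0] fun x => ‖x‖ ^ 2) :
    Continuous fun x => g x / ‖x‖ ^ 2 := by
  refine continuous_iff_continuousAt.2 fun x => ?_
  rcases eq_or_ne x 0 with rfl | hx
  · -- the quotient takes the junk value `g 0 / 0 = 0` at the origin, which is its limit there
    simpa [ContinuousAt] using ho.tendsto_div_nhds_zero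
  · exact hg.continuousAt.div (by fun_prop) (by simpa using hx)

section Polynomial

variable {ι : Type*} [Fintype ι]

theorem MvPolynomial.eval_sum_X_sq (x : EuclideanSpace ℝ ι) :
    eval x.ofLp (∑ i, X i ^ 2) = ‖x‖ ^ 2 := by
  simp [EuclideanSpace.norm_sq_eq]

theorem exists_mvPolynomial_eval_eq_linearMap (D : EuclideanSpace ℝ ι →ₗ[ℝ] ℝ) :
    ∃ p : MvPolynomial ι ℝ, ∀ x, eval x.ofLp p = D x := by
  classical
  refine ⟨∑ i, C (D (EuclideanSpace.single i 1)) * X i, fun x => ?_⟩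
  conv_rhs => rw [← (EuclideanSpace.basisFun ι ℝ).toBasis.sum_repr x]
  simp [mul_comm]

theorem exists_mvPolynomial_eval_eq_bilinForm (B : LinearMap.BilinForm ℝ (EuclideanSpace ℝ ι)) :
    ∃ p : MvPolynomial ι ℝ, ∀ x, eval x.ofLp p = B x x := by
  classical
  choose q hq using fun i => exists_mvPolynomial_eval_eq_linearMap (B (EuclideanSpace.single i 1))
  refine ⟨∑ i, X i * q i, fun x => ?_⟩
  have hx := congrArg (B · x) ((EuclideanSpace.basisFun ι ℝ).toBasis.sum_repr x)
  simpa [hq] using hx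

theorem exists_mvPolynomial_near_continuous {K : Set (EuclideanSpace ℝ ι)} (hK : IsCompact K)
    {u : EuclideanSpace ℝ ι → ℝ} (hu : Continuous u) {ε : ℝ} (hε : 0 < ε) :
    ∃ q : MvPolynomial ι ℝ, ∀ x ∈ K, |eval x.ofLp q - u x| < ε := by
  let coord : ι → C(EuclideanSpace ℝ ι, ℝ) := fun i => ⟨fun x => x i, by fun_prop⟩
  have heval : ∀ (q : MvPolynomial ι ℝ) x, aeval coord q x = eval x.ofLp q := fun q x =>
    AlgHom.congr_fun (comp_aeval coord (ContinuousMap.evalAlgHom ℝ ℝ x)) q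
  have hsep : (aeval coord).range.SeparatesPoints := fun x y hxy => by
    obtain ⟨i, hi⟩ : ∃ i, x i ≠ y i := by
      by_contra! h
      exact hxy (WithLp.ofLp_injective 2 (funext h))
    exact ⟨coord i, ⟨coord i, ⟨X i, aeval_X (R := ℝ) coord i⟩, rfl⟩, hi⟩
  obtain ⟨g, ⟨q, rfl⟩, hg⟩ :=
    ContinuousMap.exists_mem_subalgebra_near_continuous_of_isCompact_of_separatesPoints
      hsep ⟨u, hu⟩ hK hε
  exact ⟨q, fun x hx => by simpa [heval] using hg x hx⟩

end Polynomial

theorem ContDiff.exists_mvPolynomial_abs_sub_le_mul_norm_sq {ι : Type*} [Fintype ι]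
    {W : EuclideanSpace ℝ ι → ℝ} (hW : ContDiff ℝ 2 W) {K : Set (EuclideanSpace ℝ ι)}
    (hK : IsCompact K) {ε : ℝ} (hε : 0 < ε) :
    ∃ p : MvPolynomial ι ℝ, ∀ x ∈ K, |eval x.ofLp p - W x| ≤ ε * ‖x‖ ^ 2 := by
  set D := fderiv ℝ W 0
  set B := fderiv ℝ (fderiv ℝ W) 0
  set R := fun x => W x - W 0 - D x - (2 : ℝ)⁻¹ • B x x with hR
  have hRcont : Continuous R := by
    have := hW.continuous
    fun_prop
  obtain ⟨q, hq⟩ := exists_mvPolynomial_near_continuous hK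
    (continuous_div_norm_sq_of_isLittleO hRcont hW.isLittleO_taylor_two) hε
  obtain ⟨pD, hpD⟩ := exists_mvPolynomial_eval_eq_linearMap D.toLinearMap
  obtain ⟨pB, hpB⟩ := exists_mvPolynomial_eval_eq_bilinForm B.toLinearMap₁₂
  refine ⟨C (W 0) + pD + C 2⁻¹ * pB + q * ∑ i, X i ^ 2, fun x hx => ?_⟩
  have hWx : W x = W 0 + D x + 2⁻¹ * B x x + R x / ‖x‖ ^ 2 * ‖x‖ ^ 2 := by
    rw [div_mul_cancel_of_imp fun h => by simp_all [R]]
    simp only [hR, smul_eq_mul]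
    ring
  have hdiff : eval x.ofLp (C (W 0) + pD + C 2⁻¹ * pB + q * ∑ i, X i ^ 2) - W x
      = (eval x.ofLp q - R x / ‖x‖ ^ 2) * ‖x‖ ^ 2 := by
    simp only [map_add, map_mul, eval_C, eval_sum_X_sq, hpD, hpB, ContinuousLinearMap.coe_coe,
      ContinuousLinearMap.toLinearMap₁₂_apply_apply_apply, hWx]
    ring
  rw [hdiff, abs_mul, abs_of_nonneg (sq_nonneg ‖x‖)]
  gcongr
  exact (hq x hx).le

theorem lyapunov_ineqs_of_abs_sub_le {E : Type*} [SeminormedAddGroup E] {V W : E → ℝ} {x y : E}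
    {ε L : ℝ} (hε : 0 ≤ ε) (hdec : W y - W x ≤ -‖x‖ ^ 2) (hlb : ‖x‖ ^ 2 ≤ W x)
    (hVx : |V x - W x| ≤ ε * ‖x‖ ^ 2) (hVy : |V y - W y| ≤ ε * ‖y‖ ^ 2)
    (hy : ‖y‖ ≤ L * ‖x‖) :
    V y - V x ≤ -(1 - ε * (1 + L ^ 2)) * ‖x‖ ^ 2 ∧ (1 - ε) * ‖x‖ ^ 2 ≤ V x := by
  have hy2 : ‖y‖ ^ 2 ≤ L ^ 2 * ‖x‖ ^ 2 := by
    rw [← mul_pow]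
    exact pow_le_pow_left₀ (norm_nonneg y) hy 2
  have hεy : ε * ‖y‖ ^ 2 ≤ ε * (L ^ 2 * ‖x‖ ^ 2) := by gcongr
  obtain ⟨hVx₁, hVx₂⟩ := abs_le.1 hVx
  obtain ⟨hVy₁, hVy₂⟩ := abs_le.1 hVy
  constructor <;> linarith

theorem converse_polynomial_lyapunov {n : ℕ}
    (f : EuclideanSpace ℝ (Fin n) → EuclideanSpace ℝ (Fin n))
    (hf : Continuous f) (hf0 : f 0 = 0)
    (X : Set (EuclideanSpace ℝ (Fin n))) (hX : IsCompact X)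
    (h0X : (0 : EuclideanSpace ℝ (Fin n)) ∈ X)
    (L : ℝ) (hLip : ∀ x ∈ X, ∀ y ∈ X, ‖f x - f y‖ ≤ L * ‖x - y‖)
    (W : EuclideanSpace ℝ (Fin n) → ℝ)
    (hW : ContDiff ℝ 2 W)
    (hWdec : ∀ x, W (f x) - W x ≤ -‖x‖ ^ 2)
    (hWlb : ∀ x, W x ≥ ‖x‖ ^ 2) :
    ∃ (p : MvPolynomial (Fin n) ℝ) (α β : ℝ), 0 < α ∧ 0 < β ∧
      ∀ x ∈ X,
        MvPolynomial.eval (f x) p - MvPolynomial.eval x p ≤ -α * ‖x‖ ^ 2 ∧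
        MvPolynomial.eval x p ≥ β * ‖x‖ ^ 2 := by
  obtain ⟨ε, hε, hεL⟩ : ∃ ε > 0, ε * (1 + L ^ 2) = 1 / 2 :=
    ⟨1 / (2 * (1 + L ^ 2)), by positivity, by field_simp⟩
  obtain ⟨p, hp⟩ := hW.exists_mvPolynomial_abs_sub_le_mul_norm_sq (hX.union (hX.image hf)) hε
  refine ⟨p, 1 - ε * (1 + L ^ 2), 1 - ε, ?_, ?_, fun x hx => ?_⟩
  · linarith
  · linarith [mul_nonneg hε.le (sq_nonneg L)]
  have hfx : ‖f x‖ ≤ L * ‖x‖ := by simpa [hf0] using hLip x hx 0 h0X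
  exact lyapunov_ineqs_of_abs_sub_le (V := fun z : EuclideanSpace ℝ (Fin n) => eval z.ofLp p)
    hε.le (hWdec x) (hWlb x) (hp x (.inl hx)) (hp (f x) (.inr ⟨x, hx, rfl⟩)) hfx
end
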